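/- arXiv:2308.07596 — 2 statements merged into one kernel-verified Lean document; each statement's English description precedes it below -/
import Mathlib

section
/- Let (A,Π) be a Lie conformal algebra with a ℂ[∂]-module decomposition A = A₁ ⊕ A₂, and let H : A₂ → A₁ be a ℂ[∂]-module homomorphism with lift Ĥ. Define the twisting Π^H := e^{X_Ĥ}(Π), where X_Ĥ = [·,Ĥ]_NR. Then: (i) Π^H = Π + [Π,Ĥ]_NR + (1/2)[[Π,Ĥ]_NR,Ĥ]_NR + (1/6)[[[Π,Ĥ]_NR,Ĥ]_NR,Ĥ]_NR (the exponential series truncates); (ii) Π^H_λ = e^{-Ĥ} ∘ Π_λ ∘ (e^Ĥ ⊗ e^Ĥ); (iii) [Π^H,Π^H]_NR = 0, so Π^H is again a Lie conformal algebra structure on A, and e^Ĥ = Id + Ĥ is an isomorphism of Lie conformal algebras from (A,Π^H) to (A,Π). -/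
/- ------------------------------------------------------------------
Common definitions: λ-polynomials with coefficients in a ℂ[∂]-module,
Lie conformal algebras, modules, cochain complexes, the
Nijenhuis–Richardson bracket, bidegrees, lifts and twistings.
------------------------------------------------------------------- -/

open scoped Classical

noncomputable section

namespace LCAF

/-- `MP k M` : `M`-valued polynomials in the `k` variables `λ₀, …, λ_{k-1}`,
encoded as finitely supported functions on multi-indices. -/
abbrev MP (k : ℕ) (M : Type*) [AddCommGroup M] : Type _ :=
  (Fin k →₀ ℕ) →₀ M

variable {A B M N A₁ A₂ : Type*}

section PolyOps

variable [AddCommGroup M] [Module ℂ M] [AddCommGroup N] [Module ℂ N]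

/-- Apply a linear map to all coefficients of a polynomial. -/
def mapCoeff {k : ℕ} (g : M →ₗ[ℂ] N) (p : MP k M) : MP k N :=
  p.mapRange g (map_zero g)

/-- Multiplication by the monomial `λ^α`. -/
def monMul {k : ℕ} (α : Fin k →₀ ℕ) (p : MP k M) : MP k M :=
  Finsupp.mapDomain (fun β => α + β) p

/-- The variable `λᵢ` as a scalar polynomial. -/
def Xv {k : ℕ} (i : Fin k) : MP k ℂ :=
  Finsupp.single (Finsupp.single i 1) (1 : ℂ)

/-- Multiplication of an `M`-valued polynomial by a scalar polynomial. -/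
def scaleP {k : ℕ} (q : MP k ℂ) (p : MP k M) : MP k M :=
  q.sum fun α r => r • monMul α p

/-- The operator `q + c∂` acting on `M`-valued polynomials. -/
def opnd {k : ℕ} (D : M →ₗ[ℂ] M) (q : MP k ℂ) (c : ℂ) : MP k M → MP k M :=
  fun p => scaleP q p + c • mapCoeff D p

/-- Substitution: in an `M`-valued polynomial in `k` variables, substitute the
`i`-th variable by the affine expression `q i + (c i)·∂` (with `∂ = D` acting on
coefficients), landing in polynomials in `k'` new variables. -/
def substFun {k k' : ℕ} (D : M →ₗ[ℂ] M) (q : Fin k → MP k' ℂ) (c : Fin k → ℂ)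
    (p : MP k M) : MP k' M :=
  p.sum fun α m =>
    ((List.ofFn fun i : Fin k => (opnd D (q i) (c i))^[α i]).foldr (· ∘ ·) id)
      (Finsupp.single 0 m)

/-- Renaming of variables. -/
def renameV {k k' : ℕ} (h : Fin k → Fin k') (p : MP k M) : MP k' M :=
  Finsupp.mapDomain (fun α => Finsupp.mapDomain h α) p

/-- The substitution `λ ↦ -λ-∂` in one variable. -/
def sub1 (D : M →ₗ[ℂ] M) (p : MP 1 M) : MP 1 M :=
  substFun D (fun _ => -(Xv 0)) (fun _ => -1) p

/-- The multi-index of the single variable `λ` in one variable. -/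
def lam1 : Fin 1 →₀ ℕ := Finsupp.single 0 1

end PolyOps

section Binary

variable [AddCommGroup M] [Module ℂ M]

/-- `F` with its variable substituted by the expression `q + c ∂`, in two
variables `λ = λ₀`, `μ = λ₁`. -/
def opE (D : M →ₗ[ℂ] M) (F : A → B → MP 1 M) (q : MP 2 ℂ) (c : ℂ) (a : A) (b : B) :
    MP 2 M :=
  substFun D (fun _ => q) (fun _ => c) (F a b)

/-- `F` applied with polynomial second argument (extended coefficientwise). -/
def opR [AddCommGroup B] [Module ℂ B] (D : M →ₗ[ℂ] M) (F : A → B → MP 1 M)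
    (q : MP 2 ℂ) (c : ℂ) (a : A) (p : MP 2 B) : MP 2 M :=
  p.sum fun β x => monMul β (opE D F q c a x)

/-- `F` applied with polynomial first argument (extended coefficientwise). -/
def opL [AddCommGroup A] [Module ℂ A] (D : M →ₗ[ℂ] M) (F : A → B → MP 1 M)
    (q : MP 2 ℂ) (c : ℂ) (p : MP 2 A) (b : B) : MP 2 M :=
  p.sum fun β x => monMul β (opE D F q c x b)

end Binary

section LCA

variable [AddCommGroup A] [Module ℂ A] [AddCommGroup M] [Module ℂ M]

/-- `(A, D, br)` is a Lie conformal algebra: `br a b` is `[a_λ b]`, an `A`-valued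
polynomial in one variable `λ`. -/
structure IsLCA (D : A →ₗ[ℂ] A) (br : A → A → MP 1 A) : Prop where
  add_left : ∀ a b c : A, br (a + b) c = br a c + br b c
  smul_left : ∀ (r : ℂ) (a b : A), br (r • a) b = r • br a b
  add_right : ∀ a b c : A, br a (b + c) = br a b + br a c
  smul_right : ∀ (r : ℂ) (a b : A), br a (r • b) = r • br a b
  sesq_left : ∀ a b : A, br (D a) b = -(monMul lam1 (br a b))
  sesq_right : ∀ a b : A, br a (D b) = monMul lam1 (br a b) + mapCoeff D (br a b)
  skew : ∀ a b : A, br a b = -(sub1 D (br b a))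
  jacobi : ∀ a b c : A,
    opR D br (Xv 0) 0 a (renameV (fun _ => (1 : Fin 2)) (br b c)) =
      opL D br (Xv 0 + Xv 1) 0 (renameV (fun _ => (0 : Fin 2)) (br a b)) c +
        opR D br (Xv 1) 0 b (renameV (fun _ => (0 : Fin 2)) (br a c))

/-- `(M, DM, rho)` is a module over the Lie conformal algebra `(A, D, br)`. -/
structure IsLCAMod (D : A →ₗ[ℂ] A) (br : A → A → MP 1 A)
    (DM : M →ₗ[ℂ] M) (rho : A → M → MP 1 M) : Prop where
  add_left : ∀ (a b : A) (m : M), rho (a + b) m = rho a m + rho b m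
  smul_left : ∀ (r : ℂ) (a : A) (m : M), rho (r • a) m = r • rho a m
  add_right : ∀ (a : A) (m n : M), rho a (m + n) = rho a m + rho a n
  smul_right : ∀ (r : ℂ) (a : A) (m : M), rho a (r • m) = r • rho a m
  d_left : ∀ (a : A) (m : M), rho (D a) m = -(monMul lam1 (rho a m))
  d_right : ∀ (a : A) (m : M),
    rho a (DM m) = monMul lam1 (rho a m) + mapCoeff DM (rho a m)
  comm : ∀ (a b : A) (m : M),
    opR DM rho (Xv 0) 0 a (renameV (fun _ => (1 : Fin 2)) (rho b m)) -
      opR DM rho (Xv 1) 0 b (renameV (fun _ => (0 : Fin 2)) (rho a m)) =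
    opL DM rho (Xv 0 + Xv 1) 0 (renameV (fun _ => (0 : Fin 2)) (br a b)) m

/-- `phi` is a 2-cocycle of `(A, D, br)` with coefficients in the module
`(M, DM, rho)`. -/
structure IsTwoCocycle (D : A →ₗ[ℂ] A) (br : A → A → MP 1 A)
    (DM : M →ₗ[ℂ] M) (rho : A → M → MP 1 M) (phi : A → A → MP 1 M) : Prop where
  add_left : ∀ (a b c : A), phi (a + b) c = phi a c + phi b c
  smul_left : ∀ (r : ℂ) (a b : A), phi (r • a) b = r • phi a b
  add_right : ∀ (a b c : A), phi a (b + c) = phi a b + phi a c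
  smul_right : ∀ (r : ℂ) (a b : A), phi a (r • b) = r • phi a b
  sesq_left : ∀ a b : A, phi (D a) b = -(monMul lam1 (phi a b))
  sesq_right : ∀ a b : A, phi a (D b) = monMul lam1 (phi a b) + mapCoeff DM (phi a b)
  skew : ∀ a b : A, phi a b = -(sub1 DM (phi b a))
  cocycle : ∀ a b c : A,
    opR DM rho (Xv 0) 0 a (renameV (fun _ => (1 : Fin 2)) (phi b c))
      - opR DM rho (Xv 1) 0 b (renameV (fun _ => (0 : Fin 2)) (phi a c))
      + opR DM rho (-(Xv 0) - Xv 1) (-1) c (renameV (fun _ => (0 : Fin 2)) (phi a b))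
      + opR DM phi (Xv 0) 0 a (renameV (fun _ => (1 : Fin 2)) (br b c))
      - opR DM phi (Xv 1) 0 b (renameV (fun _ => (0 : Fin 2)) (br a c))
      - opL DM phi (Xv 0 + Xv 1) 0 (renameV (fun _ => (0 : Fin 2)) (br a b)) c = 0

/-- `T : M → A` is a relative Rota–Baxter operator. -/
def IsRB (br : A → A → MP 1 A) (DM : M →ₗ[ℂ] M) (rho : A → M → MP 1 M)
    (T : M →ₗ[ℂ] A) : Prop :=
  ∀ m n : M, br (T m) (T n) = mapCoeff T (rho (T m) n - sub1 DM (rho (T n) m))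

/-- `T : M → A` is a `φ`-twisted relative Rota–Baxter operator. -/
def IsTwistedRB (br : A → A → MP 1 A) (DM : M →ₗ[ℂ] M) (rho : A → M → MP 1 M)
    (phi : A → A → MP 1 M) (T : M →ₗ[ℂ] A) : Prop :=
  ∀ m n : M, br (T m) (T n) =
    mapCoeff T (rho (T m) n - sub1 DM (rho (T n) m) + phi (T m) (T n))

/-- Combine an `A`-valued and an `M`-valued polynomial into an `A × M`-valued one. -/
def pairP {k : ℕ} (p : MP k A) (q : MP k M) : MP k (A × M) :=
  Finsupp.mapRange (fun a => (a, (0 : M))) rfl p +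
    Finsupp.mapRange (fun m => ((0 : A), m)) rfl q

/-- The (φ-twisted) semidirect product λ-bracket on `A × M`. -/
def sdBr (br : A → A → MP 1 A) (DM : M →ₗ[ℂ] M) (rho : A → M → MP 1 M)
    (phi : A → A → MP 1 M) : A × M → A × M → MP 1 (A × M) :=
  fun x y => pairP (br x.1 y.1) (rho x.1 y.2 - sub1 DM (rho y.1 x.2) + phi x.1 y.1)

end LCA

section NS

variable [AddCommGroup A] [Module ℂ A]

/-- The λ-bracket `[a_λ b] = a∘_λ b - b∘_{-λ-∂} a + a∨_λ b` attached to a pair of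
λ-multiplications. -/
def lieNS (D : A →ₗ[ℂ] A) (o v : A → A → MP 1 A) : A → A → MP 1 A :=
  fun a b => o a b - sub1 D (o b a) + v a b

/-- `(A, ∘_λ, ∨_λ)` is an NS-Lie conformal algebra. -/
structure IsNSLie (D : A →ₗ[ℂ] A) (o v : A → A → MP 1 A) : Prop where
  o_add_left : ∀ a b c : A, o (a + b) c = o a c + o b c
  o_smul_left : ∀ (r : ℂ) (a b : A), o (r • a) b = r • o a b
  o_add_right : ∀ a b c : A, o a (b + c) = o a b + o a c
  o_smul_right : ∀ (r : ℂ) (a b : A), o a (r • b) = r • o a b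
  o_sesq_left : ∀ a b : A, o (D a) b = -(monMul lam1 (o a b))
  o_sesq_right : ∀ a b : A, o a (D b) = monMul lam1 (o a b) + mapCoeff D (o a b)
  v_add_left : ∀ a b c : A, v (a + b) c = v a c + v b c
  v_smul_left : ∀ (r : ℂ) (a b : A), v (r • a) b = r • v a b
  v_add_right : ∀ a b c : A, v a (b + c) = v a b + v a c
  v_smul_right : ∀ (r : ℂ) (a b : A), v a (r • b) = r • v a b
  v_sesq_left : ∀ a b : A, v (D a) b = -(monMul lam1 (v a b))
  v_sesq_right : ∀ a b : A, v a (D b) = monMul lam1 (v a b) + mapCoeff D (v a b)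
  v_skew : ∀ a b : A, v a b = -(sub1 D (v b a))
  ns1 : ∀ a b c : A,
    opL D o (Xv 0 + Xv 1) 0 (renameV (fun _ => (0 : Fin 2)) (o a b)) c
      - opR D o (Xv 0) 0 a (renameV (fun _ => (1 : Fin 2)) (o b c))
      - opL D o (Xv 0 + Xv 1) 0 (renameV (fun _ => (1 : Fin 2)) (o b a)) c
      + opR D o (Xv 1) 0 b (renameV (fun _ => (0 : Fin 2)) (o a c))
      + opL D o (Xv 0 + Xv 1) 0 (renameV (fun _ => (0 : Fin 2)) (v a b)) c = 0
  ns2 : ∀ a b c : A,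
    opR D v (Xv 0) 0 a (renameV (fun _ => (1 : Fin 2)) (lieNS D o v b c))
      - opL D v (Xv 0 + Xv 1) 0 (renameV (fun _ => (0 : Fin 2)) (lieNS D o v a b)) c
      - opR D v (Xv 1) 0 b (renameV (fun _ => (0 : Fin 2)) (lieNS D o v a c))
      + opR D o (Xv 0) 0 a (renameV (fun _ => (1 : Fin 2)) (v b c))
      - opR D o (Xv 1) 0 b (renameV (fun _ => (0 : Fin 2)) (v a c))
      + opR D o (-(Xv 0) - Xv 1) (-1) c (renameV (fun _ => (0 : Fin 2)) (v a b)) = 0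

/-- `(A, ≻_λ, ≺_λ, ⋎_λ)` is a conformal NS-algebra. -/
structure IsConfNS (D : A →ₗ[ℂ] A) (su pr cu : A → A → MP 1 A) : Prop where
  su_add_left : ∀ a b c : A, su (a + b) c = su a c + su b c
  su_smul_left : ∀ (r : ℂ) (a b : A), su (r • a) b = r • su a b
  su_add_right : ∀ a b c : A, su a (b + c) = su a b + su a c
  su_smul_right : ∀ (r : ℂ) (a b : A), su a (r • b) = r • su a b
  su_sesq_left : ∀ a b : A, su (D a) b = -(monMul lam1 (su a b))
  su_sesq_right : ∀ a b : A, su a (D b) = monMul lam1 (su a b) + mapCoeff D (su a b)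
  pr_add_left : ∀ a b c : A, pr (a + b) c = pr a c + pr b c
  pr_smul_left : ∀ (r : ℂ) (a b : A), pr (r • a) b = r • pr a b
  pr_add_right : ∀ a b c : A, pr a (b + c) = pr a b + pr a c
  pr_smul_right : ∀ (r : ℂ) (a b : A), pr a (r • b) = r • pr a b
  pr_sesq_left : ∀ a b : A, pr (D a) b = -(monMul lam1 (pr a b))
  pr_sesq_right : ∀ a b : A, pr a (D b) = monMul lam1 (pr a b) + mapCoeff D (pr a b)
  cu_add_left : ∀ a b c : A, cu (a + b) c = cu a c + cu b c
  cu_smul_left : ∀ (r : ℂ) (a b : A), cu (r • a) b = r • cu a b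
  cu_add_right : ∀ a b c : A, cu a (b + c) = cu a b + cu a c
  cu_smul_right : ∀ (r : ℂ) (a b : A), cu a (r • b) = r • cu a b
  cu_sesq_left : ∀ a b : A, cu (D a) b = -(monMul lam1 (cu a b))
  cu_sesq_right : ∀ a b : A, cu a (D b) = monMul lam1 (cu a b) + mapCoeff D (cu a b)
  ax1 : ∀ x y z : A,
    opR D su (Xv 0) 0 x (renameV (fun _ => (1 : Fin 2)) (su y z)) =
      opL D su (Xv 0 + Xv 1) 0
        (renameV (fun _ => (0 : Fin 2)) (su x y + pr x y + cu x y)) z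
  ax2 : ∀ x y z : A,
    opR D pr (Xv 0) 0 x (renameV (fun _ => (1 : Fin 2)) (su y z + pr y z + cu y z)) =
      opL D pr (Xv 0 + Xv 1) 0 (renameV (fun _ => (0 : Fin 2)) (pr x y)) z
  ax3 : ∀ x y z : A,
    opR D su (Xv 0) 0 x (renameV (fun _ => (1 : Fin 2)) (pr y z)) =
      opL D pr (Xv 0 + Xv 1) 0 (renameV (fun _ => (0 : Fin 2)) (su x y)) z
  ax4 : ∀ x y z : A,
    opR D su (Xv 0) 0 x (renameV (fun _ => (1 : Fin 2)) (cu y z)) -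
        opL D cu (Xv 0 + Xv 1) 0
          (renameV (fun _ => (0 : Fin 2)) (su x y + pr x y + cu x y)) z =
      opL D pr (Xv 0 + Xv 1) 0 (renameV (fun _ => (0 : Fin 2)) (cu x y)) z -
        opR D cu (Xv 0) 0 x (renameV (fun _ => (1 : Fin 2)) (su y z + pr y z + cu y z))

/-- `N` is a Nijenhuis operator on the Lie conformal algebra `(A, D, br)`. -/
def IsNijenhuis (D : A →ₗ[ℂ] A) (br : A → A → MP 1 A) (N : A →ₗ[ℂ] A) : Prop :=
  (∀ a : A, N (D a) = D (N a)) ∧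
  ∀ a b : A, br (N a) (N b) =
    mapCoeff N (br (N a) b + br a (N b) - mapCoeff N (br a b))

/-- The deformed bracket `[a_λ b]_N`. -/
def deformBr (br : A → A → MP 1 A) (N : A →ₗ[ℂ] A) : A → A → MP 1 A :=
  fun a b => br (N a) b + br a (N b) - mapCoeff N (br a b)

end NS

/- ------------------------  cochains  ------------------------ -/

/-- `RawC n A M` : the underlying maps of cochains in `C^{n+1}(A, M)`:
`n+1` arguments from `A`, values in `M`-valued polynomials in `n` variables. -/
abbrev RawC (n : ℕ) (A : Type*) (M : Type*) [AddCommGroup M] : Type _ :=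
  (Fin (n + 1) → A) → MP n M

section CochainDefs

variable [AddCommGroup A] [Module ℂ A] [AddCommGroup M] [Module ℂ M]

/-- The scalar-polynomial part of the expression for `λ_t`, where the last
variable is replaced by `λ† = -λ₀ - ⋯ - λ_{N-1} - ∂`. -/
def exprQ {N : ℕ} (t : Fin (N + 1)) : MP N ℂ :=
  if h : t = Fin.last N then -(∑ i : Fin N, Xv i) else Xv (t.castPred h)

/-- The `∂`-coefficient of the expression for `λ_t`. -/
def exprC {N : ℕ} (t : Fin (N + 1)) : ℂ :=
  if t = Fin.last N then -1 else 0

/-- `f` is a cochain in `C^{n+1}(A, M)` (conformal sesquilinearity, multilinearity,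
and skew-symmetry with the substitution `λ_{last} ↦ λ†`). -/
structure IsCochain {n : ℕ} (DA : A →ₗ[ℂ] A) (DM : M →ₗ[ℂ] M) (f : RawC n A M) :
    Prop where
  map_add : ∀ (a : Fin (n + 1) → A) (i : Fin (n + 1)) (x y : A),
    f (Function.update a i (x + y)) =
      f (Function.update a i x) + f (Function.update a i y)
  map_smul : ∀ (a : Fin (n + 1) → A) (i : Fin (n + 1)) (r : ℂ) (x : A),
    f (Function.update a i (r • x)) = r • f (Function.update a i x)
  sesq : ∀ (a : Fin (n + 1) → A) (i : Fin n),
    f (Function.update a i.castSucc (DA (a i.castSucc))) =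
      -(monMul (Finsupp.single i 1) (f a))
  sesq_last : ∀ a : Fin (n + 1) → A,
    f (Function.update a (Fin.last n) (DA (a (Fin.last n)))) =
      (∑ i : Fin n, monMul (Finsupp.single i 1) (f a)) + mapCoeff DM (f a)
  skew : ∀ (σ : Equiv.Perm (Fin (n + 1))) (a : Fin (n + 1) → A),
    f a = ((Equiv.Perm.sign σ : ℤˣ) : ℤ) •
      substFun DM (fun j : Fin n => exprQ (σ j.castSucc))
        (fun j : Fin n => exprC (σ j.castSucc)) (f (a ∘ σ))

/-- `(t, N-t)`-unshuffles : permutations strictly increasing on the first `t`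
positions and on the remaining positions. -/
def IsUnsh {N : ℕ} (t : ℕ) (σ : Equiv.Perm (Fin N)) : Prop :=
  ∀ i j : Fin N, i < j → (j.val < t ∨ t ≤ i.val) → σ i < σ j

/-- The `⋄`-product (unshuffle-sum insertion) of cochains:
`f ∈ C^{p+1}(A,A)`, `g ∈ C^{q+1}(A,A)`, `f⋄g ∈ C^{p+q+1}(A,A)`. -/
def diamond {p q : ℕ} (DA : A →ₗ[ℂ] A) (f : RawC p A A) (g : RawC q A A) :
    RawC (p + q) A A := fun a =>
  ∑ σ ∈ Finset.univ.filter (fun σ : Equiv.Perm (Fin (p + q + 1)) => IsUnsh (q + 1) σ),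
    ((Equiv.Perm.sign σ : ℤˣ) : ℤ) •
      substFun DA
        (fun v : Fin (p + q) =>
          if v.val = q then
            ∑ i : Fin (q + 1), exprQ (σ (Fin.castLE (by omega) i))
          else exprQ (σ v.castSucc))
        (fun v : Fin (p + q) =>
          if v.val = q then
            ∑ i : Fin (q + 1), exprC (σ (Fin.castLE (by omega) i))
          else exprC (σ v.castSucc))
        ((g fun i : Fin (q + 1) => a (σ (Fin.castLE (by omega) i))).sum fun β x =>
          monMul
            (Finsupp.mapDomain
              (fun i : Fin q => (Fin.cast (by omega) (Fin.castAdd p i) : Fin (p + q))) β)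
            (renameV (fun j : Fin p => (Fin.cast (by omega) (Fin.natAdd q j) : Fin (p + q)))
              (f (Fin.cons x fun j : Fin p =>
                a (σ (Fin.cast (by omega) (Fin.natAdd (q + 1) j)))))))

/-- Transport a raw cochain along an equality of degrees. -/
def castRaw {m n : ℕ} (h : m = n) (f : RawC m A M) : RawC n A M := h ▸ f

/-- The Nijenhuis–Richardson bracket `[f,g] = f⋄g - (-1)^{pq} g⋄f`. -/
def nr {p q : ℕ} (DA : A →ₗ[ℂ] A) (f : RawC p A A) (g : RawC q A A) :
    RawC (p + q) A A :=
  diamond DA f g - ((-1 : ℤ)) ^ (p * q) • castRaw (Nat.add_comm q p) (diamond DA g f)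

end CochainDefs

section Bidegree

variable [AddCommGroup A₁] [Module ℂ A₁] [AddCommGroup A₂] [Module ℂ A₂]

/-- `x` is a pure element: in `A₁` (if `b`) or in `A₂` (if `¬b`). -/
def IsPure (x : A₁ × A₂) (b : Bool) : Prop :=
  if b then x.2 = 0 else x.1 = 0

/-- `f ∈ C^{n+1}(A₁⊕A₂, A₁⊕A₂)` has bidegree `k|l`. -/
def HasBidegree {n : ℕ} (f : RawC n (A₁ × A₂) (A₁ × A₂)) (k l : ℤ) : Prop :=
  k + l = (n : ℤ) ∧
  ∀ (P : Fin (n + 1) → Bool) (a : Fin (n + 1) → A₁ × A₂),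
    (∀ i, IsPure (a i) (P i)) →
    ((((Finset.univ.filter fun i => P i = true).card : ℤ) = k + 1 →
        ∀ β, ((f a) β).2 = 0) ∧
      ((((Finset.univ.filter fun i => P i = true).card : ℤ) = k) →
        ∀ β, ((f a) β).1 = 0) ∧
      (((((Finset.univ.filter fun i => P i = true).card : ℤ) ≠ k + 1) ∧
        (((Finset.univ.filter fun i => P i = true).card : ℤ) ≠ k)) → f a = 0))

/-- The lift of `f ∈ C^{n+1}(A₂, A₁)` to a cochain on `A₁ ⊕ A₂`. -/
def liftC {n : ℕ} (f : RawC n A₂ A₁) : RawC n (A₁ × A₂) (A₁ × A₂) :=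
  fun x => Finsupp.mapRange (fun a => (a, (0 : A₂))) rfl (f fun i => (x i).2)

/-- Recover `f ∈ C^{n+1}(A₂, A₁)` from (a lift of) a cochain on `A₁ ⊕ A₂`. -/
def downC {n : ℕ} (g : RawC n (A₁ × A₂) (A₁ × A₂)) : RawC n A₂ A₁ :=
  fun v => Finsupp.mapRange Prod.fst rfl (g fun i => ((0 : A₁), v i))

/-- The lift of a `ℂ[∂]`-module homomorphism `H : A₂ → A₁` as a `1`-cochain on
`A₁ ⊕ A₂`. -/
def hatHom (H : A₂ →ₗ[ℂ] A₁) : RawC 0 (A₁ × A₂) (A₁ × A₂) :=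
  fun x => Finsupp.single 0 (H ((x 0).2), (0 : A₂))

/-- `H : A₂ → A₁` viewed as an element of `C^1(A₂, A₁)`. -/
def hatC1 (H : A₂ →ₗ[ℂ] A₁) : RawC 0 A₂ A₁ :=
  fun v => Finsupp.single 0 (H (v 0))

/-- The structure map of a λ-bracket as a 2-cochain. -/
def toC2 {A : Type*} [AddCommGroup A] (br : A → A → MP 1 A) : RawC 1 A A :=
  fun a => br (a 0) (a 1)

/-- `l₁ = d_{μ̂₂}` on `C^*(A₂, A₁)`. -/
def ell1 (DA : (A₁ × A₂) →ₗ[ℂ] (A₁ × A₂)) (mu2 : RawC 1 (A₁ × A₂) (A₁ × A₂))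
    {n : ℕ} (f : RawC n A₂ A₁) : RawC (n + 1) A₂ A₁ :=
  downC (castRaw (show 1 + n = n + 1 by omega) (nr DA mu2 (liftC f)))

/-- `l₂ = [·,·]_{μ̂₁}` on `C^*(A₂, A₁)`. -/
def ell2 (DA : (A₁ × A₂) →ₗ[ℂ] (A₁ × A₂)) (mu1 : RawC 1 (A₁ × A₂) (A₁ × A₂))
    {m n : ℕ} (f : RawC m A₂ A₁) (g : RawC n A₂ A₁) : RawC (m + n + 1) A₂ A₁ :=
  ((-1 : ℤ)) ^ m •
    downC (castRaw (show 1 + m + n = m + n + 1 by omega)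
      (nr DA (nr DA mu1 (liftC f)) (liftC g)))

/-- `l₃ = [·,·,·]_{φ̂₁}` on `C^*(A₂, A₁)`. -/
def ell3 (DA : (A₁ × A₂) →ₗ[ℂ] (A₁ × A₂)) (phi1 : RawC 1 (A₁ × A₂) (A₁ × A₂))
    {m n k : ℕ} (f : RawC m A₂ A₁) (g : RawC n A₂ A₁) (h : RawC k A₂ A₁) :
    RawC (m + n + k + 1) A₂ A₁ :=
  ((-1 : ℤ)) ^ n •
    downC (castRaw (show 1 + m + n + k = m + n + k + 1 by omega)
      (nr DA (nr DA (nr DA phi1 (liftC f)) (liftC g)) (liftC h)))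

/-- `Π` is a twilled Lie conformal algebra structure on `A₁ ⊕ A₂`. -/
def IsTwilledStr (DA : (A₁ × A₂) →ₗ[ℂ] (A₁ × A₂))
    (Pi : RawC 1 (A₁ × A₂) (A₁ × A₂)) : Prop :=
  IsCochain DA DA Pi ∧ nr DA Pi Pi = 0 ∧
    ∃ m1 m2 : RawC 1 (A₁ × A₂) (A₁ × A₂),
      HasBidegree m1 1 0 ∧ HasBidegree m2 0 1 ∧ Pi = m1 + m2

/-- `Π` is a quasi-twilled Lie conformal algebra structure on `A₁ ⊕ A₂`. -/
def IsQuasiTwilledStr (DA : (A₁ × A₂) →ₗ[ℂ] (A₁ × A₂))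
    (Pi : RawC 1 (A₁ × A₂) (A₁ × A₂)) : Prop :=
  IsCochain DA DA Pi ∧ nr DA Pi Pi = 0 ∧
    ∃ p1 m1 m2 : RawC 1 (A₁ × A₂) (A₁ × A₂),
      HasBidegree p1 2 (-1) ∧ HasBidegree m1 1 0 ∧ HasBidegree m2 0 1 ∧
        Pi = p1 + m1 + m2

end Bidegree

section Twist

variable [AddCommGroup A] [Module ℂ A]

/-- The twisting `Π^H = e^{X_Ĥ}(Π)` of a `2`-cochain by (the lift of) a
`ℂ[∂]`-module homomorphism. -/
def twist (DA : A →ₗ[ℂ] A) (Pi : RawC 1 A A) (hH : RawC 0 A A) : RawC 1 A A :=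
  Pi + nr DA Pi hH + (2 : ℂ)⁻¹ • nr DA (nr DA Pi hH) hH
    + (6 : ℂ)⁻¹ • nr DA (nr DA (nr DA Pi hH) hH) hH

end Twist

end LCAF

namespace LCAF

section GradedStructures

variable {A₁ A₂ : Type*} [AddCommGroup A₁] [Module ℂ A₁] [AddCommGroup A₂] [Module ℂ A₂]

/-- The subspace of `⊕ₙ RawC n A₂ A₁` cut out by `P` (placing `RawC n` in degree
`n+1`), equipped with `d` and `br`, is a differential graded Lie algebra. -/
structure IsDGLAOn
    (P : ∀ {n : ℕ}, RawC n A₂ A₁ → Prop)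
    (d : ∀ {n : ℕ}, RawC n A₂ A₁ → RawC (n + 1) A₂ A₁)
    (br : ∀ {m n : ℕ}, RawC m A₂ A₁ → RawC n A₂ A₁ → RawC (m + n + 1) A₂ A₁) :
    Prop where
  mem_zero : ∀ {n : ℕ}, P (0 : RawC n A₂ A₁)
  mem_add : ∀ {n : ℕ} (f g : RawC n A₂ A₁), P f → P g → P (f + g)
  mem_smul : ∀ {n : ℕ} (r : ℂ) (f : RawC n A₂ A₁), P f → P (r • f)
  mem_d : ∀ {n : ℕ} (f : RawC n A₂ A₁), P f → P (d f)
  mem_br : ∀ {m n : ℕ} (f : RawC m A₂ A₁) (g : RawC n A₂ A₁), P f → P g → P (br f g)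
  d_add : ∀ {n : ℕ} (f g : RawC n A₂ A₁), P f → P g → d (f + g) = d f + d g
  d_smul : ∀ {n : ℕ} (r : ℂ) (f : RawC n A₂ A₁), P f → d (r • f) = r • d f
  br_add_left : ∀ {m n : ℕ} (f f' : RawC m A₂ A₁) (g : RawC n A₂ A₁),
    P f → P f' → P g → br (f + f') g = br f g + br f' g
  br_smul_left : ∀ {m n : ℕ} (r : ℂ) (f : RawC m A₂ A₁) (g : RawC n A₂ A₁),
    P f → P g → br (r • f) g = r • br f g
  br_add_right : ∀ {m n : ℕ} (f : RawC m A₂ A₁) (g g' : RawC n A₂ A₁),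
    P f → P g → P g' → br f (g + g') = br f g + br f g'
  br_smul_right : ∀ {m n : ℕ} (r : ℂ) (f : RawC m A₂ A₁) (g : RawC n A₂ A₁),
    P f → P g → br f (r • g) = r • br f g
  d_squared : ∀ {n : ℕ} (f : RawC n A₂ A₁), P f → d (d f) = 0
  skew : ∀ {m n : ℕ} (f : RawC m A₂ A₁) (g : RawC n A₂ A₁), P f → P g →
    br f g = ((-1 : ℤ)) ^ ((m + 1) * (n + 1) + 1) •
      castRaw (show n + m + 1 = m + n + 1 by omega) (br g f)
  leibniz : ∀ {m n : ℕ} (f : RawC m A₂ A₁) (g : RawC n A₂ A₁), P f → P g →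
    castRaw (show m + n + 1 + 1 = m + n + 2 by omega) (d (br f g)) =
      castRaw (show m + 1 + n + 1 = m + n + 2 by omega) (br (d f) g) +
      ((-1 : ℤ)) ^ (m + 1) •
        castRaw (show m + (n + 1) + 1 = m + n + 2 by omega) (br f (d g))
  jacobi : ∀ {m n k : ℕ} (f : RawC m A₂ A₁) (g : RawC n A₂ A₁) (h : RawC k A₂ A₁),
    P f → P g → P h →
    castRaw (show m + (n + k + 1) + 1 = m + n + k + 2 by omega) (br f (br g h)) =
      castRaw (show m + n + 1 + k + 1 = m + n + k + 2 by omega) (br (br f g) h) +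
      ((-1 : ℤ)) ^ ((m + 1) * (n + 1)) •
        castRaw (show n + (m + k + 1) + 1 = m + n + k + 2 by omega) (br g (br f h))

/-- The subspace of `⊕ₙ RawC n A₂ A₁` cut out by `P` (placing `RawC n` in degree
`n+1`), with operations `l₁, l₂, l₃` (and `lᵢ = 0` for `i ≥ 4`), is an
`L∞`-algebra: graded skew-symmetry and the higher Jacobi identities
`∑_{i+j=n+1} (-1)^i ∑_{σ ∈ Sh(i,n-i)} χ(σ) l_j(l_i(x_{σ(1)},…),…) = 0`
(only `n = 1, …, 5` are nontrivial since `lᵢ = 0` for `i ≥ 4`). -/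
structure IsLInftyOn
    (P : ∀ {n : ℕ}, RawC n A₂ A₁ → Prop)
    (l1 : ∀ {n : ℕ}, RawC n A₂ A₁ → RawC (n + 1) A₂ A₁)
    (l2 : ∀ {m n : ℕ}, RawC m A₂ A₁ → RawC n A₂ A₁ → RawC (m + n + 1) A₂ A₁)
    (l3 : ∀ {m n k : ℕ}, RawC m A₂ A₁ → RawC n A₂ A₁ → RawC k A₂ A₁ →
      RawC (m + n + k + 1) A₂ A₁) : Prop where
  mem_zero : ∀ {n : ℕ}, P (0 : RawC n A₂ A₁)
  mem_add : ∀ {n : ℕ} (f g : RawC n A₂ A₁), P f → P g → P (f + g)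
  mem_smul : ∀ {n : ℕ} (r : ℂ) (f : RawC n A₂ A₁), P f → P (r • f)
  mem_l1 : ∀ {n : ℕ} (f : RawC n A₂ A₁), P f → P (l1 f)
  mem_l2 : ∀ {m n : ℕ} (f : RawC m A₂ A₁) (g : RawC n A₂ A₁), P f → P g → P (l2 f g)
  mem_l3 : ∀ {m n k : ℕ} (f : RawC m A₂ A₁) (g : RawC n A₂ A₁) (h : RawC k A₂ A₁),
    P f → P g → P h → P (l3 f g h)
  l1_add : ∀ {n : ℕ} (f g : RawC n A₂ A₁), P f → P g → l1 (f + g) = l1 f + l1 g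
  l1_smul : ∀ {n : ℕ} (r : ℂ) (f : RawC n A₂ A₁), P f → l1 (r • f) = r • l1 f
  l2_add_left : ∀ {m n : ℕ} (f f' : RawC m A₂ A₁) (g : RawC n A₂ A₁),
    P f → P f' → P g → l2 (f + f') g = l2 f g + l2 f' g
  l2_smul_left : ∀ {m n : ℕ} (r : ℂ) (f : RawC m A₂ A₁) (g : RawC n A₂ A₁),
    P f → P g → l2 (r • f) g = r • l2 f g
  l2_add_right : ∀ {m n : ℕ} (f : RawC m A₂ A₁) (g g' : RawC n A₂ A₁),
    P f → P g → P g' → l2 f (g + g') = l2 f g + l2 f g'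
  l2_smul_right : ∀ {m n : ℕ} (r : ℂ) (f : RawC m A₂ A₁) (g : RawC n A₂ A₁),
    P f → P g → l2 f (r • g) = r • l2 f g
  l3_add₁ : ∀ {m n k : ℕ} (f f' : RawC m A₂ A₁) (g : RawC n A₂ A₁) (h : RawC k A₂ A₁),
    P f → P f' → P g → P h → l3 (f + f') g h = l3 f g h + l3 f' g h
  l3_smul₁ : ∀ {m n k : ℕ} (r : ℂ) (f : RawC m A₂ A₁) (g : RawC n A₂ A₁)
    (h : RawC k A₂ A₁), P f → P g → P h → l3 (r • f) g h = r • l3 f g h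
  l3_add₂ : ∀ {m n k : ℕ} (f : RawC m A₂ A₁) (g g' : RawC n A₂ A₁) (h : RawC k A₂ A₁),
    P f → P g → P g' → P h → l3 f (g + g') h = l3 f g h + l3 f g' h
  l3_smul₂ : ∀ {m n k : ℕ} (r : ℂ) (f : RawC m A₂ A₁) (g : RawC n A₂ A₁)
    (h : RawC k A₂ A₁), P f → P g → P h → l3 f (r • g) h = r • l3 f g h
  l3_add₃ : ∀ {m n k : ℕ} (f : RawC m A₂ A₁) (g : RawC n A₂ A₁) (h h' : RawC k A₂ A₁),
    P f → P g → P h → P h' → l3 f g (h + h') = l3 f g h + l3 f g h'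
  l3_smul₃ : ∀ {m n k : ℕ} (r : ℂ) (f : RawC m A₂ A₁) (g : RawC n A₂ A₁)
    (h : RawC k A₂ A₁), P f → P g → P h → l3 f g (r • h) = r • l3 f g h
  skew2 : ∀ {m n : ℕ} (f : RawC m A₂ A₁) (g : RawC n A₂ A₁), P f → P g →
    l2 f g = ((-1 : ℤ)) ^ ((m + 1) * (n + 1) + 1) •
      castRaw (show n + m + 1 = m + n + 1 by omega) (l2 g f)
  skew3a : ∀ {m n k : ℕ} (f : RawC m A₂ A₁) (g : RawC n A₂ A₁) (h : RawC k A₂ A₁),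
    P f → P g → P h →
    l3 f g h = ((-1 : ℤ)) ^ ((m + 1) * (n + 1) + 1) •
      castRaw (show n + m + k + 1 = m + n + k + 1 by omega) (l3 g f h)
  skew3b : ∀ {m n k : ℕ} (f : RawC m A₂ A₁) (g : RawC n A₂ A₁) (h : RawC k A₂ A₁),
    P f → P g → P h →
    l3 f g h = ((-1 : ℤ)) ^ ((n + 1) * (k + 1) + 1) •
      castRaw (show m + k + n + 1 = m + n + k + 1 by omega) (l3 f h g)
  jac1 : ∀ {n : ℕ} (f : RawC n A₂ A₁), P f → l1 (l1 f) = 0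
  jac2 : ∀ {m n : ℕ} (f : RawC m A₂ A₁) (g : RawC n A₂ A₁), P f → P g →
    castRaw (show m + n + 1 + 1 = m + n + 2 by omega) (l1 (l2 f g))
      - castRaw (show m + 1 + n + 1 = m + n + 2 by omega) (l2 (l1 f) g)
      + ((-1 : ℤ)) ^ ((m + 1) * (n + 1)) •
          castRaw (show n + 1 + m + 1 = m + n + 2 by omega) (l2 (l1 g) f)
      = 0
  jac3 : ∀ {m n k : ℕ} (f : RawC m A₂ A₁) (g : RawC n A₂ A₁) (h : RawC k A₂ A₁),
    P f → P g → P h →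
    -(castRaw (show m + 1 + n + k + 1 = m + n + k + 2 by omega) (l3 (l1 f) g h))
      + ((-1 : ℤ)) ^ ((m + 1) * (n + 1)) •
          castRaw (show n + 1 + m + k + 1 = m + n + k + 2 by omega) (l3 (l1 g) f h)
      - ((-1 : ℤ)) ^ ((k + 1) * ((m + 1) + (n + 1))) •
          castRaw (show k + 1 + m + n + 1 = m + n + k + 2 by omega) (l3 (l1 h) f g)
      + castRaw (show m + n + 1 + k + 1 = m + n + k + 2 by omega) (l2 (l2 f g) h)
      - ((-1 : ℤ)) ^ ((n + 1) * (k + 1)) •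
          castRaw (show m + k + 1 + n + 1 = m + n + k + 2 by omega) (l2 (l2 f h) g)
      + ((-1 : ℤ)) ^ ((m + 1) * ((n + 1) + (k + 1))) •
          castRaw (show n + k + 1 + m + 1 = m + n + k + 2 by omega) (l2 (l2 g h) f)
      - castRaw (show m + n + k + 1 + 1 = m + n + k + 2 by omega) (l1 (l3 f g h))
      = 0
  jac4 : ∀ {m n k l : ℕ} (f : RawC m A₂ A₁) (g : RawC n A₂ A₁) (h : RawC k A₂ A₁)
    (e : RawC l A₂ A₁), P f → P g → P h → P e →
    castRaw (show m + n + 1 + k + l + 1 = m + n + k + l + 2 by omega) (l3 (l2 f g) h e)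
      - ((-1 : ℤ)) ^ ((n + 1) * (k + 1)) •
          castRaw (show m + k + 1 + n + l + 1 = m + n + k + l + 2 by omega)
            (l3 (l2 f h) g e)
      + ((-1 : ℤ)) ^ ((l + 1) * ((n + 1) + (k + 1))) •
          castRaw (show m + l + 1 + n + k + 1 = m + n + k + l + 2 by omega)
            (l3 (l2 f e) g h)
      + ((-1 : ℤ)) ^ ((m + 1) * ((n + 1) + (k + 1))) •
          castRaw (show n + k + 1 + m + l + 1 = m + n + k + l + 2 by omega)
            (l3 (l2 g h) f e)
      - ((-1 : ℤ)) ^ ((m + 1) * (n + 1) + (m + 1) * (l + 1) + (k + 1) * (l + 1)) •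
          castRaw (show n + l + 1 + m + k + 1 = m + n + k + l + 2 by omega)
            (l3 (l2 g e) f h)
      + ((-1 : ℤ)) ^ (((m + 1) + (n + 1)) * ((k + 1) + (l + 1))) •
          castRaw (show k + l + 1 + m + n + 1 = m + n + k + l + 2 by omega)
            (l3 (l2 h e) f g)
      - castRaw (show m + n + k + 1 + l + 1 = m + n + k + l + 2 by omega)
          (l2 (l3 f g h) e)
      + ((-1 : ℤ)) ^ ((k + 1) * (l + 1)) •
          castRaw (show m + n + l + 1 + k + 1 = m + n + k + l + 2 by omega)
            (l2 (l3 f g e) h)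
      - ((-1 : ℤ)) ^ ((n + 1) * ((k + 1) + (l + 1))) •
          castRaw (show m + k + l + 1 + n + 1 = m + n + k + l + 2 by omega)
            (l2 (l3 f h e) g)
      + ((-1 : ℤ)) ^ ((m + 1) * ((n + 1) + (k + 1) + (l + 1))) •
          castRaw (show n + k + l + 1 + m + 1 = m + n + k + l + 2 by omega)
            (l2 (l3 g h e) f)
      = 0
  jac5 : ∀ {a b c d e : ℕ} (x1 : RawC a A₂ A₁) (x2 : RawC b A₂ A₁) (x3 : RawC c A₂ A₁)
    (x4 : RawC d A₂ A₁) (x5 : RawC e A₂ A₁), P x1 → P x2 → P x3 → P x4 → P x5 →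
    castRaw (show a + b + c + 1 + d + e + 1 = a + b + c + d + e + 2 by omega)
        (l3 (l3 x1 x2 x3) x4 x5)
      - ((-1 : ℤ)) ^ ((c + 1) * (d + 1)) •
          castRaw (show a + b + d + 1 + c + e + 1 = a + b + c + d + e + 2 by omega)
            (l3 (l3 x1 x2 x4) x3 x5)
      + ((-1 : ℤ)) ^ ((e + 1) * ((c + 1) + (d + 1))) •
          castRaw (show a + b + e + 1 + c + d + 1 = a + b + c + d + e + 2 by omega)
            (l3 (l3 x1 x2 x5) x3 x4)
      + ((-1 : ℤ)) ^ ((b + 1) * ((c + 1) + (d + 1))) •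
          castRaw (show a + c + d + 1 + b + e + 1 = a + b + c + d + e + 2 by omega)
            (l3 (l3 x1 x3 x4) x2 x5)
      - ((-1 : ℤ)) ^ ((b + 1) * (c + 1) + (b + 1) * (e + 1) + (d + 1) * (e + 1)) •
          castRaw (show a + c + e + 1 + b + d + 1 = a + b + c + d + e + 2 by omega)
            (l3 (l3 x1 x3 x5) x2 x4)
      + ((-1 : ℤ)) ^ (((b + 1) + (c + 1)) * ((d + 1) + (e + 1))) •
          castRaw (show a + d + e + 1 + b + c + 1 = a + b + c + d + e + 2 by omega)
            (l3 (l3 x1 x4 x5) x2 x3)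
      - ((-1 : ℤ)) ^ ((a + 1) * ((b + 1) + (c + 1) + (d + 1))) •
          castRaw (show b + c + d + 1 + a + e + 1 = a + b + c + d + e + 2 by omega)
            (l3 (l3 x2 x3 x4) x1 x5)
      + ((-1 : ℤ)) ^ ((a + 1) * ((b + 1) + (c + 1) + (e + 1)) + (d + 1) * (e + 1)) •
          castRaw (show b + c + e + 1 + a + d + 1 = a + b + c + d + e + 2 by omega)
            (l3 (l3 x2 x3 x5) x1 x4)
      - ((-1 : ℤ)) ^ ((a + 1) * ((b + 1) + (d + 1) + (e + 1)) + (c + 1) * ((d + 1) + (e + 1))) •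
          castRaw (show b + d + e + 1 + a + c + 1 = a + b + c + d + e + 2 by omega)
            (l3 (l3 x2 x4 x5) x1 x3)
      + ((-1 : ℤ)) ^ (((a + 1) + (b + 1)) * ((c + 1) + (d + 1) + (e + 1))) •
          castRaw (show c + d + e + 1 + a + b + 1 = a + b + c + d + e + 2 by omega)
            (l3 (l3 x3 x4 x5) x1 x2)
      = 0

end GradedStructures

section TwistHom

variable {A₁ A₂ : Type*} [AddCommGroup A₁] [Module ℂ A₁] [AddCommGroup A₂] [Module ℂ A₂]

/-- `e^Ĥ = Id + Ĥ` as a linear endomorphism of `A₁ ⊕ A₂`. -/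
def eHp (H : A₂ →ₗ[ℂ] A₁) : (A₁ × A₂) →ₗ[ℂ] (A₁ × A₂) :=
  LinearMap.id + (LinearMap.inl ℂ A₁ A₂).comp (H.comp (LinearMap.snd ℂ A₁ A₂))

/-- `e^{-Ĥ} = Id - Ĥ` as a linear endomorphism of `A₁ ⊕ A₂`. -/
def eHm (H : A₂ →ₗ[ℂ] A₁) : (A₁ × A₂) →ₗ[ℂ] (A₁ × A₂) :=
  LinearMap.id - (LinearMap.inl ℂ A₁ A₂).comp (H.comp (LinearMap.snd ℂ A₁ A₂))

end TwistHom

end LCAF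

/-!
Write `N = inl ∘ H ∘ snd`, a `ℂ[∂]`-endomorphism of `A₁ ⊕ A₂` with `N² = 0`. On
skew-symmetric 2-cochains, `X_Ĥ = [·, Ĥ]_NR` acts as `Π ↦ Π ∘ (N ⊗ 1) + Π ∘ (1 ⊗ N) - N ∘ Π`.
On additive cochains these three operators commute pairwise and square to zero (a
precomposition squares to `Π ∘ (0 ⊗ 1) = 0`), so `X_Ĥ⁴ = 0` and the truncated exponential
`1 + X + X²/2 + X³/6` is the product `(1 - N∘)(1 + ∘(N ⊗ 1))(1 + ∘(1 ⊗ N))`, which by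
additivity is `Π ↦ e^{-N} ∘ Π ∘ (e^N ⊗ e^N)`. Finally `⋄`, hence `[·,·]_NR`, is natural
under the `ℂ[∂]`-automorphism `e^N`, so `[Π^H, Π^H]_NR` is the transport of `[Π, Π]_NR = 0`.
-/

namespace LCAF

section Polynomials

variable {M : Type*} [AddCommGroup M]

lemma monMul_zero_left {k : ℕ} (p : MP k M) : monMul 0 p = p := by
  rw [monMul]
  simp only [zero_add]
  exact Finsupp.mapDomain_id

lemma renameV_id {k : ℕ} (p : MP k M) : renameV (fun i => i) p = p := by
  have h : (fun α : Fin k →₀ ℕ => Finsupp.mapDomain (fun i => i) α) = id :=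
    funext fun _ => Finsupp.mapDomain_id
  rw [renameV, h, Finsupp.mapDomain_id]

variable [Module ℂ M]

lemma mapCoeff_eq_mapRange {N : Type*} [AddCommGroup N] [Module ℂ N] {k : ℕ} (g : M →ₗ[ℂ] N)
    (p : MP k M) : mapCoeff g p = Finsupp.mapRange.linearMap g p := rfl

lemma mapCoeff_mapCoeff {k : ℕ} (f g : M →ₗ[ℂ] M) (p : MP k M) :
    mapCoeff g (mapCoeff f p) = mapCoeff (g * f) p := by
  ext
  simp [mapCoeff]

lemma mapCoeff_one {k : ℕ} (p : MP k M) : mapCoeff 1 p = p :=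
  Finsupp.mapRange_id p

lemma mapCoeff_neg_left {k : ℕ} (N : M →ₗ[ℂ] M) (p : MP k M) :
    mapCoeff (-N) p = -mapCoeff N p := by
  ext
  simp [mapCoeff]

lemma sum_mapCoeff_of_injective {k : ℕ} {X : Type*} [AddCommMonoid X] {S : M →ₗ[ℂ] M}
    (hS : Function.Injective S) (p : MP k M) (F : (Fin k →₀ ℕ) → M → X) :
    (mapCoeff S p).sum F = p.sum fun β x => F β (S x) := by
  simp only [Finsupp.sum, mapCoeff, Finsupp.support_mapRange_of_injective _ _ hS,
    Finsupp.mapRange_apply]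

def opndLin {k : ℕ} (D : M →ₗ[ℂ] M) (q : MP k ℂ) (c : ℂ) : Module.End ℂ (MP k M) :=
  (q.sum fun α r => r • Finsupp.lmapDomain M ℂ (α + ·)) + c • Finsupp.mapRange.linearMap D

lemma coe_opndLin {k : ℕ} (D : M →ₗ[ℂ] M) (q : MP k ℂ) (c : ℂ) :
    ⇑(opndLin D q c) = opnd D q c := by
  ext p : 1
  simp [opndLin, opnd, scaleP, monMul, mapCoeff, Finsupp.sum, LinearMap.sum_apply]

def substOp {k k' : ℕ} (D : M →ₗ[ℂ] M) (q : Fin k → MP k' ℂ) (c : Fin k → ℂ)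
    (α : Fin k →₀ ℕ) : Module.End ℂ (MP k' M) :=
  (List.ofFn fun i => opndLin D (q i) (c i) ^ α i).prod

lemma foldr_comp_map_coe {R V : Type*} [Semiring R] [AddCommMonoid V] [Module R V]
    (l : List (Module.End R V)) : (l.map (⇑)).foldr (· ∘ ·) id = ⇑l.prod := by
  induction l with
  | nil => rfl
  | cons f l ih => simp [ih, Module.End.mul_eq_comp]

def substLin {k k' : ℕ} (D : M →ₗ[ℂ] M) (q : Fin k → MP k' ℂ) (c : Fin k → ℂ) :
    MP k M →ₗ[ℂ] MP k' M :=
  Finsupp.lsum ℂ fun α => substOp D q c α ∘ₗ Finsupp.lsingle 0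

lemma coe_substLin {k k' : ℕ} (D : M →ₗ[ℂ] M) (q : Fin k → MP k' ℂ) (c : Fin k → ℂ) :
    ⇑(substLin D q c) = substFun D q c := by
  ext p : 1
  have h : ∀ α : Fin k →₀ ℕ,
      (List.ofFn fun i => (opnd D (q i) (c i))^[α i]).foldr (· ∘ ·) id = ⇑(substOp D q c α) :=
    fun α => by
      rw [substOp, ← foldr_comp_map_coe, List.map_ofFn]
      simp [Function.comp_def, Module.End.coe_pow, coe_opndLin]
  rw [substLin, Finsupp.lsum_apply, substFun]
  exact Finsupp.sum_congr fun α _ => by rw [h]; rfl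

lemma commute_mapRange_opndLin {k : ℕ} {D S : M →ₗ[ℂ] M} (hS : ∀ m, S (D m) = D (S m))
    (q : MP k ℂ) (c : ℂ) : Commute (Finsupp.mapRange.linearMap S) (opndLin D q c) := by
  refine Commute.add_right (Commute.sum_right _ _ _ fun α _ => Commute.smul_right ?_ _)
    (Commute.smul_right ?_ _) <;> ext β m : 2
  · simp
  · simp [hS]

lemma substFun_mapCoeff {k k' : ℕ} {D S : M →ₗ[ℂ] M} (hS : ∀ m, S (D m) = D (S m))
    (q : Fin k → MP k' ℂ) (c : Fin k → ℂ) (p : MP k M) :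
    substFun D q c (mapCoeff S p) = mapCoeff S (substFun D q c p) := by
  have hcomm : ∀ α, Commute (Finsupp.mapRange.linearMap S) (substOp D q c α) := fun α =>
    Commute.list_prod_right _ _ fun f hf => by
      obtain ⟨i, rfl⟩ := List.mem_ofFn.mp hf
      exact (commute_mapRange_opndLin hS (q i) (c i)).pow_right _
  rw [← coe_substLin, mapCoeff_eq_mapRange, mapCoeff_eq_mapRange, ← LinearMap.comp_apply,
    ← LinearMap.comp_apply]
  congr 1
  refine Finsupp.lhom_ext' fun α => LinearMap.ext fun m => ?_
  simpa [substLin] using (LinearMap.congr_fun (hcomm α) (Finsupp.single 0 m)).symm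

lemma sub1_add (D : M →ₗ[ℂ] M) (p q : MP 1 M) : sub1 D (p + q) = sub1 D p + sub1 D q := by
  simp only [sub1, ← coe_substLin, map_add]

lemma sub1_mapCoeff {D S : M →ₗ[ℂ] M} (hS : ∀ m, S (D m) = D (S m)) (p : MP 1 M) :
    sub1 D (mapCoeff S p) = mapCoeff S (sub1 D p) :=
  substFun_mapCoeff hS _ _ p

def shiftHom (k : ℕ) : Multiplicative (Fin k →₀ ℕ) →* Module.End ℂ (MP k M) where
  toFun β := Finsupp.lmapDomain M ℂ (β.toAdd + ·)
  map_one' := by ext; simp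
  map_mul' β γ := by ext; simp [Module.End.mul_apply, add_assoc]

lemma substFun_Xv (D : M →ₗ[ℂ] M) {k : ℕ} (p : MP k M) :
    substFun D Xv (fun _ => 0) p = p := by
  have hop : ∀ i : Fin k,
      opndLin D (Xv i) 0 = shiftHom (M := M) k (.ofAdd (Finsupp.single i 1)) := by
    intro i
    simp [opndLin, Xv, shiftHom]
  have hprod : ∀ α, substOp D Xv (fun _ => 0) α = shiftHom (M := M) k (.ofAdd α) := by
    intro α
    simp only [substOp, hop, ← map_pow]
    rw [← Function.comp_def (shiftHom k), ← List.map_ofFn, ← map_list_prod, List.prod_ofFn]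
    congr 1
    simp only [← ofAdd_nsmul, ← ofAdd_sum, Finsupp.smul_single_one, Finsupp.univ_sum_single]
  rw [← coe_substLin, substLin, Finsupp.lsum_apply]
  conv_rhs => rw [← Finsupp.sum_single p]
  refine Finsupp.sum_congr fun α _ => ?_
  simp [hprod, shiftHom]

end Polynomials

section SquareZero

theorem exp_add_add_of_mul_self_eq_zero {R : Type*} [CommRing R] [Algebra ℂ R] {a b c : R}
    (ha : a * a = 0) (hb : b * b = 0) (hc : c * c = 0) :
    (a + b + c) ^ 4 = 0 ∧
      1 + (a + b + c) + (2 : ℂ)⁻¹ • (a + b + c) ^ 2 + (6 : ℂ)⁻¹ • (a + b + c) ^ 3 =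
        (1 + a) * (1 + b) * (1 + c) := by
  have h2 : (a + b + c) ^ 2 = (2 : ℂ) • (a * b + b * c + c * a) := by
    rw [Algebra.smul_def, map_ofNat]
    linear_combination ha + hb + hc
  have h3 : (a + b + c) ^ 3 = (6 : ℂ) • (a * b * c) := by
    rw [Algebra.smul_def, map_ofNat]
    linear_combination (a + 3 * b + 3 * c) * ha + (3 * a + b + 3 * c) * hb
      + (3 * a + 3 * b + c) * hc
  refine ⟨?_, ?_⟩
  · rw [Algebra.smul_def, map_ofNat] at h3
    linear_combination (a + b + c) * h3 + 6 * b * c * ha + 6 * a * c * hb + 6 * a * b * hc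
  · rw [h2, h3, smul_smul, smul_smul, inv_mul_cancel₀ two_ne_zero,
      inv_mul_cancel₀ (by norm_num), one_smul, one_smul]
    ring

open scoped IsMulCommutative in
theorem exp_add_add_of_commute_of_mul_self_eq_zero {R : Type*} [Ring R] [Algebra ℂ R] {a b c : R}
    (hab : Commute a b) (hbc : Commute b c) (hca : Commute c a)
    (ha : a * a = 0) (hb : b * b = 0) (hc : c * c = 0) :
    (a + b + c) ^ 4 = 0 ∧
      1 + (a + b + c) + (2 : ℂ)⁻¹ • (a + b + c) ^ 2 + (6 : ℂ)⁻¹ • (a + b + c) ^ 3 =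
        (1 + a) * (1 + b) * (1 + c) := by
  have := Algebra.isMulCommutative_adjoin ℂ (s := {a, b, c}) (by
    simp only [Set.mem_insert_iff, Set.mem_singleton_iff]
    rintro x (rfl | rfl | rfl) y (rfl | rfl | rfl) <;> simp only [hab.eq, hbc.eq, hca.eq])
  have hmem : ∀ x ∈ ({a, b, c} : Set R), x ∈ Algebra.adjoin ℂ {a, b, c} :=
    fun x hx => Algebra.subset_adjoin hx
  obtain ⟨h4, hexp⟩ := exp_add_add_of_mul_self_eq_zero (R := Algebra.adjoin ℂ {a, b, c})
    (a := ⟨a, hmem a (by simp)⟩) (b := ⟨b, hmem b (by simp)⟩) (c := ⟨c, hmem c (by simp)⟩)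
    (Subtype.ext ha) (Subtype.ext hb) (Subtype.ext hc)
  exact ⟨congrArg Subtype.val h4, congrArg Subtype.val hexp⟩

end SquareZero

section Cochains

variable {A : Type*} [AddCommGroup A] [Module ℂ A]

lemma exprQ_castSucc {N : ℕ} (t : Fin N) : exprQ t.castSucc = Xv t := by
  simp [exprQ, Fin.castSucc_ne_last]

lemma exprC_castSucc {N : ℕ} (t : Fin N) : exprC t.castSucc = 0 := by
  simp [exprC, Fin.castSucc_ne_last]

lemma exprQ_zero : exprQ (0 : Fin 2) = Xv 0 := exprQ_castSucc 0

lemma exprC_zero : exprC (0 : Fin 2) = 0 := exprC_castSucc 0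

lemma exprQ_one : exprQ (1 : Fin 2) = -Xv 0 := by simp [exprQ, Fin.last]

lemma exprC_one : exprC (1 : Fin 2) = -1 := by simp [exprC, Fin.last]

lemma filter_isUnsh_self (N : ℕ) :
    Finset.univ.filter (fun σ : Equiv.Perm (Fin N) => IsUnsh N σ) = {1} := by
  ext σ
  simp only [Finset.mem_filter, Finset.mem_univ, true_and, Finset.mem_singleton]
  refine ⟨fun h => Equiv.ext fun i => congrFun (StrictMono.eq_id fun i j hij =>
    h i j hij (Or.inl j.isLt)) i, ?_⟩
  rintro rfl i j hij _
  exact hij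

lemma filter_isUnsh_one_fin_two :
    Finset.univ.filter (fun σ : Equiv.Perm (Fin 2) => IsUnsh 1 σ) = {1, Equiv.swap 0 1} := by
  rw [Finset.filter_true_of_mem fun σ _ i j hij h => absurd h (by omega)]
  decide

def toC1 (N : A →ₗ[ℂ] A) : RawC 0 A A := fun x => Finsupp.single 0 (N (x 0))

def conjC {n : ℕ} (S T : A →ₗ[ℂ] A) (f : RawC n A A) : RawC n A A :=
  fun a => mapCoeff S (f fun i => T (a i))

def IsSkew (DA : A →ₗ[ℂ] A) (P : RawC 1 A A) : Prop :=
  ∀ b, P b = -sub1 DA (P (b ∘ Equiv.swap 0 1))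

lemma conjC_zero {n : ℕ} (S T : A →ₗ[ℂ] A) : conjC S T (0 : RawC n A A) = 0 :=
  funext fun _ => map_zero (Finsupp.mapRange.linearMap S)

variable (A) in
def additiveC (n : ℕ) : Submodule ℂ (RawC n A A) where
  carrier := {P | ∀ (b : Fin (n + 1) → A) (i : Fin (n + 1)) (x y : A),
    P (Function.update b i (x + y)) = P (Function.update b i x) + P (Function.update b i y)}
  add_mem' {P Q} hP hQ b i x y := by
    simp only [Pi.add_apply, hP b i x y, hQ b i x y]
    abel
  zero_mem' _ _ _ _ := by simp
  smul_mem' r P hP b i x y := by simp only [Pi.smul_apply, hP b i x y, smul_add]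

lemma apply_eq_zero_of_mem_additiveC {n : ℕ} {P : RawC n A A} (hP : P ∈ additiveC A n)
    {b : Fin (n + 1) → A} {i : Fin (n + 1)} (hb : b i = 0) : P b = 0 := by
  have h := hP b i 0 0
  rwa [add_zero, ← hb, Function.update_eq_self, left_eq_add] at h

lemma IsCochain.mem_additiveC {n : ℕ} {DA : A →ₗ[ℂ] A} {P : RawC n A A}
    (hC : IsCochain DA DA P) : P ∈ additiveC A n :=
  hC.map_add

lemma IsCochain.isSkew {DA : A →ₗ[ℂ] A} {P : RawC 1 A A} (hC : IsCochain DA DA P) :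
    IsSkew DA P := by
  intro b
  have h := hC.skew (Equiv.swap 0 1) b
  have hq : (fun j : Fin 1 => exprQ (Equiv.swap (0 : Fin 2) 1 j.castSucc)) = fun _ => -Xv 0 :=
    funext fun j => by rw [Subsingleton.elim j 0]; exact exprQ_one
  have hc : (fun j : Fin 1 => exprC (Equiv.swap (0 : Fin 2) 1 j.castSucc)) = fun _ => -1 :=
    funext fun j => by rw [Subsingleton.elim j 0]; exact exprC_one
  rw [Equiv.Perm.sign_swap (by decide), hq, hc, Units.val_neg, Units.val_one, neg_one_zsmul] at h
  exact h

end Cochains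

section Diamond

variable {A : Type*} [AddCommGroup A] [Module ℂ A]

lemma diamond_toC1_left (DA N : A →ₗ[ℂ] A) (P : RawC 1 A A) (a : Fin 2 → A) :
    diamond DA (toC1 N) P a = mapCoeff N (P a) := by
  have hid : ∀ β : Fin 1 →₀ ℕ, Finsupp.mapDomain (fun i => i) β = β :=
    fun _ => Finsupp.mapDomain_id
  simp only [diamond, toC1, filter_isUnsh_self, Finset.sum_singleton]
  simp only [Nat.reduceAdd, Equiv.Perm.sign_one, Units.val_one, Fin.val_eq_zero, zero_ne_one,
    ↓reduceIte, Equiv.Perm.coe_one, id_eq, exprQ_castSucc, exprC_castSucc, Fin.castLE_refl, monMul,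
    Nat.add_zero, Fin.castAdd_zero, Fin.cast_eq_self, renameV, Fin.isValue, Fin.cons_zero,
    Finsupp.mapDomain_single, Finsupp.mapDomain_zero, add_zero, substFun_Xv, one_smul]
  ext β
  simp only [Finsupp.sum_apply, Finsupp.single_apply, mapCoeff_eq_mapRange,
    Finsupp.mapRange.linearMap_apply, Finsupp.mapRange_apply, hid]
  rw [Finsupp.sum_ite_eq']
  split_ifs with h
  · rfl
  · rw [Finsupp.notMem_support_iff.mp h, map_zero]

lemma diamond_toC1_right {DA : A →ₗ[ℂ] A} (N : A →ₗ[ℂ] A) {P : RawC 1 A A}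
    (hP : P ∈ additiveC A 1) (hskew : IsSkew DA P) (a : Fin 2 → A) :
    diamond DA P (toC1 N) a =
      P (Function.update a 0 (N (a 0))) + P (Function.update a 1 (N (a 1))) := by
  have h0 : ∀ x, Fin.cons x (fun j : Fin 1 => a j.succ) = Function.update a 0 x := fun x => by
    funext i; fin_cases i <;> rfl
  have h1 : ∀ x, Fin.cons x (fun j : Fin 1 => a (Equiv.swap 0 1 j.succ)) =
      Function.update a 1 x ∘ Equiv.swap 0 1 := fun x => by
    funext i; fin_cases i <;> rfl
  have hXv : (fun _ : Fin 1 => (Xv 0 : MP 1 ℂ)) = Xv :=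
    funext fun v => by rw [Subsingleton.elim v 0]
  simp only [Nat.add_zero, diamond, Nat.reduceAdd, zero_add, filter_isUnsh_one_fin_two,
    Fin.isValue, Fin.val_eq_zero, ↓reduceIte, Finset.univ_unique, Fin.default_eq_zero,
    Finset.sum_singleton, Fin.castLE_zero, toC1, Fin.cast_eq_self, Fin.natAdd_zero,
    Fin.natAdd_eq_addNat, Fin.addNat_one]
  rw [Finset.sum_pair (by decide)]
  simp only [Equiv.Perm.sign_one, Units.val_one, Fin.isValue, Equiv.Perm.coe_one, id_eq,
    exprQ_zero, exprC_zero, h0, one_smul, Equiv.Perm.sign_swap', zero_ne_one, ↓reduceIte,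
    Units.val_neg, Int.reduceNeg, Equiv.swap_apply_left, exprQ_one, exprC_one, h1, neg_smul]
  -- the transposition contributes `-sub1 DA (P (… ∘ swap))`, which is `P …` by skew-symmetry
  have hs : ∀ b, -substFun DA (fun _ => -Xv 0) (fun _ => -1) (P (b ∘ Equiv.swap 0 1)) = P b :=
    fun b => (hskew b).symm
  rw [Finsupp.sum_single_index, Finsupp.sum_single_index]
  · simp only [Finsupp.mapDomain_zero, monMul_zero_left, renameV_id, hXv, substFun_Xv, hs]
  all_goals rw [apply_eq_zero_of_mem_additiveC hP (i := 0) (by simp), renameV_id]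
  all_goals exact Finsupp.mapDomain_zero

lemma diamond_conjC {p q : ℕ} {DA S T : A →ₗ[ℂ] A} (hTS : ∀ v, T (S v) = v)
    (hSD : ∀ v, S (DA v) = DA (S v)) (f : RawC p A A) (g : RawC q A A) :
    diamond DA (conjC S T f) (conjC S T g) = conjC S T (diamond DA f g) := by
  have hcons : ∀ (x : A) (v : Fin p → A),
      (fun i => T ((Fin.cons (S x) v : Fin (p + 1) → A) i)) = Fin.cons x fun j => T (v j) := by
    intro x v
    rw [← Function.comp_def T, Fin.comp_cons, hTS]
    rfl
  funext a
  simp only [diamond, conjC, mapCoeff_eq_mapRange, map_sum, map_zsmul]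
  refine Finset.sum_congr rfl fun σ _ => ?_
  rw [← mapCoeff_eq_mapRange, ← mapCoeff_eq_mapRange, ← substFun_mapCoeff hSD]
  congr 2
  rw [sum_mapCoeff_of_injective (Function.LeftInverse.injective hTS), mapCoeff_eq_mapRange,
    map_finsuppSum]
  refine Finsupp.sum_congr fun β _ => ?_
  rw [hcons]
  simp only [monMul, renameV, Finsupp.mapRange.linearMap_apply]
  rw [Finsupp.mapDomain_mapRange _ _ _ _ (map_add S),
    Finsupp.mapDomain_mapRange _ _ _ _ (map_add S)]

lemma castRaw_conjC {m n : ℕ} (h : m = n) (S T : A →ₗ[ℂ] A) (f : RawC m A A) :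
    castRaw h (conjC S T f) = conjC S T (castRaw h f) := by
  subst h
  rfl

lemma nr_conjC {p q : ℕ} {DA S T : A →ₗ[ℂ] A} (hTS : ∀ v, T (S v) = v)
    (hSD : ∀ v, S (DA v) = DA (S v)) (f : RawC p A A) (g : RawC q A A) :
    nr DA (conjC S T f) (conjC S T g) = conjC S T (nr DA f g) := by
  rw [nr, nr, diamond_conjC hTS hSD, diamond_conjC hTS hSD, castRaw_conjC]
  funext a
  simp only [conjC, Pi.sub_apply, Pi.smul_apply, mapCoeff_eq_mapRange, map_sub, map_zsmul]

end Diamond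

section Operators

variable {A : Type*} [AddCommGroup A] [Module ℂ A] {n : ℕ}

lemma precompAt_mem (N : A →ₗ[ℂ] A) (i : Fin (n + 1)) {P : RawC n A A}
    (hP : P ∈ additiveC A n) :
    (fun b => P (Function.update b i (N (b i)))) ∈ additiveC A n := by
  intro b j x y
  by_cases hij : j = i
  · subst hij
    simp only [Function.update_idem, Function.update_self, map_add]
    exact hP b j (N x) (N y)
  · simp only [Function.update_of_ne (Ne.symm hij) _ b]
    simp only [Function.update_comm hij _ (N (b i)) b]
    exact hP _ j x y

lemma postcomp_mem (N : A →ₗ[ℂ] A) {P : RawC n A A} (hP : P ∈ additiveC A n) :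
    (fun b => mapCoeff N (P b)) ∈ additiveC A n := by
  intro b i x y
  simp only [hP b i x y, mapCoeff_eq_mapRange, map_add]

def precompAt (N : A →ₗ[ℂ] A) (i : Fin (n + 1)) : Module.End ℂ (additiveC A n) where
  toFun P := ⟨fun b => P.1 (Function.update b i (N (b i))), precompAt_mem N i P.2⟩
  map_add' _ _ := rfl
  map_smul' _ _ := rfl

def postcomp (N : A →ₗ[ℂ] A) : Module.End ℂ (additiveC A n) where
  toFun P := ⟨fun b => mapCoeff N (P.1 b), postcomp_mem N P.2⟩
  map_add' P Q := by ext b : 2; exact map_add (Finsupp.mapRange.linearMap N) _ _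
  map_smul' r P := by ext b : 2; exact map_smul (Finsupp.mapRange.linearMap N) _ _

lemma precompAt_apply (N : A →ₗ[ℂ] A) (i : Fin (n + 1)) (P : additiveC A n) (b : Fin (n + 1) → A) :
    (precompAt N i P : RawC n A A) b = (P : RawC n A A) (Function.update b i (N (b i))) := rfl

lemma postcomp_apply (N : A →ₗ[ℂ] A) (P : additiveC A n) (b : Fin (n + 1) → A) :
    (postcomp N P : RawC n A A) b = mapCoeff N ((P : RawC n A A) b) := rfl

lemma commute_precompAt (N : A →ₗ[ℂ] A) {i j : Fin (n + 1)} (hij : i ≠ j) :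
    Commute (precompAt N i) (precompAt N j) := by
  ext P b : 3
  simp only [Module.End.mul_apply, precompAt_apply, Function.update_of_ne hij,
    Function.update_of_ne (Ne.symm hij), Function.update_comm hij]

lemma commute_postcomp_precompAt (M N : A →ₗ[ℂ] A) (i : Fin (n + 1)) :
    Commute (postcomp M) (precompAt N i) := rfl

lemma precompAt_mul_self {N : A →ₗ[ℂ] A} (hNN : ∀ v, N (N v) = 0) (i : Fin (n + 1)) :
    precompAt N i * precompAt N i = 0 := by
  ext P b : 3
  simp only [Module.End.mul_apply, precompAt_apply, Function.update_idem, Function.update_self,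
    hNN, LinearMap.zero_apply, ZeroMemClass.coe_zero, Pi.zero_apply]
  exact apply_eq_zero_of_mem_additiveC P.2 (Function.update_self i 0 b)

lemma postcomp_mul_self {N : A →ₗ[ℂ] A} (hNN : ∀ v, N (N v) = 0) :
    postcomp N * postcomp N = (0 : Module.End ℂ (additiveC A n)) := by
  ext P b β : 4
  simp [postcomp_apply, mapCoeff_eq_mapRange, hNN]

lemma one_add_precompAt (N : A →ₗ[ℂ] A) (i : Fin (n + 1)) :
    1 + precompAt N i = precompAt (1 + N) i := by
  ext P b : 3
  simp only [LinearMap.add_apply, Module.End.one_apply, Submodule.coe_add, Pi.add_apply,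
    precompAt_apply, LinearMap.add_apply, Module.End.one_apply]
  rw [P.2 b i (b i) (N (b i)), Function.update_eq_self]

lemma one_add_postcomp (N : A →ₗ[ℂ] A) :
    1 + postcomp N = (postcomp (1 + N) : Module.End ℂ (additiveC A n)) := by
  ext P b β : 4
  simp [postcomp_apply, mapCoeff_eq_mapRange]

end Operators

section Twisting

variable {A : Type*} [AddCommGroup A] [Module ℂ A] {DA N : A →ₗ[ℂ] A}

/-- `X_N = [·, N]_NR`, i.e. `Π ↦ Π ∘ (N ⊗ 1) + Π ∘ (1 ⊗ N) - N ∘ Π`, on additive `2`-cochains. -/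
def derivOp (N : A →ₗ[ℂ] A) : Module.End ℂ (additiveC A 1) :=
  postcomp (-N) + precompAt N 0 + precompAt N 1

lemma nr_toC1 (P : additiveC A 1) (hskew : IsSkew DA P) :
    nr DA (P : RawC 1 A A) (toC1 N) = derivOp N P := by
  funext a
  have hcast : ∀ f : RawC (0 + 1) A A, castRaw (Nat.add_comm 0 1) f = (f : RawC (1 + 0) A A) :=
    fun _ => rfl
  rw [nr, hcast, Pi.sub_apply, Pi.smul_apply, diamond_toC1_right N P.2 hskew, diamond_toC1_left,
    mul_zero, pow_zero, one_smul]
  simp only [derivOp, LinearMap.add_apply, Submodule.coe_add, Pi.add_apply, postcomp_apply,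
    precompAt_apply, mapCoeff_neg_left]
  abel

lemma isSkew_derivOp (hND : ∀ v, N (DA v) = DA (N v)) {P : additiveC A 1}
    (hskew : IsSkew DA P) : IsSkew DA (derivOp N P) := by
  intro b
  have h0 : Function.update (b ∘ Equiv.swap 0 1) 0 (N (b 1)) =
      Function.update b 1 (N (b 1)) ∘ Equiv.swap 0 1 := by
    funext i; fin_cases i <;> rfl
  have h1 : Function.update (b ∘ Equiv.swap 0 1) 1 (N (b 0)) =
      Function.update b 0 (N (b 0)) ∘ Equiv.swap 0 1 := by
    funext i; fin_cases i <;> rfl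
  have hNeg : ∀ v, (-N) (DA v) = DA ((-N) v) := fun v => by simp [hND]
  simp only [derivOp, LinearMap.add_apply, Submodule.coe_add, Pi.add_apply, postcomp_apply,
    precompAt_apply, Function.comp_apply, Equiv.swap_apply_left, Equiv.swap_apply_right, h0, h1]
  rw [sub1_add, sub1_add, sub1_mapCoeff hNeg]
  conv_lhs => rw [hskew b, hskew (Function.update b 0 _), hskew (Function.update b 1 _)]
  rw [mapCoeff_eq_mapRange, mapCoeff_eq_mapRange, map_neg]
  abel

lemma iterate_nr_toC1 (hND : ∀ v, N (DA v) = DA (N v)) (P : additiveC A 1)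
    (hskew : IsSkew DA P) (i : ℕ) :
    (fun Q => nr DA Q (toC1 N))^[i] (P : RawC 1 A A) = ((derivOp N ^ i) P : additiveC A 1) := by
  induction i generalizing P with
  | zero => rfl
  | succ i ih =>
    rw [Function.iterate_succ_apply, nr_toC1 P hskew, ih _ (isSkew_derivOp hND hskew), pow_succ,
      Module.End.mul_apply]

lemma exp_derivOp (hNN : ∀ v, N (N v) = 0) :
    derivOp N ^ 4 = 0 ∧
      1 + derivOp N + (2 : ℂ)⁻¹ • derivOp N ^ 2 + (6 : ℂ)⁻¹ • derivOp N ^ 3 =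
        (1 + postcomp (-N)) * (1 + precompAt N 0) * (1 + precompAt N 1) := by
  have hNN' : ∀ v, (-N) ((-N) v) = 0 := fun v => by
    rw [LinearMap.neg_apply, LinearMap.neg_apply, map_neg, neg_neg, hNN]
  unfold derivOp
  exact exp_add_add_of_commute_of_mul_self_eq_zero (R := Module.End ℂ (additiveC A 1))
    (commute_postcomp_precompAt _ _ _) (commute_precompAt N (by decide : (0 : Fin 2) ≠ 1))
    (commute_postcomp_precompAt _ _ _).symm
    (postcomp_mul_self hNN') (precompAt_mul_self hNN 0) (precompAt_mul_self hNN 1)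

theorem iterate_nr_toC1_eq_zero (hNN : ∀ v, N (N v) = 0) (hND : ∀ v, N (DA v) = DA (N v))
    {P : RawC 1 A A} (hC : IsCochain DA DA P) {i : ℕ} (hi : 4 ≤ i) :
    (fun Q => nr DA Q (toC1 N))^[i] P = 0 := by
  rw [iterate_nr_toC1 hND ⟨P, hC.mem_additiveC⟩ hC.isSkew, pow_eq_zero_of_le hi (exp_derivOp hNN).1]
  rfl

theorem twist_toC1 (hNN : ∀ v, N (N v) = 0) (hND : ∀ v, N (DA v) = DA (N v))
    {P : RawC 1 A A} (hC : IsCochain DA DA P) :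
    twist DA P (toC1 N) = conjC (1 - N) (1 + N) P := by
  set P' : additiveC A 1 := ⟨P, hC.mem_additiveC⟩
  have hF : ∀ i, (fun Q => nr DA Q (toC1 N))^[i] P = ((derivOp N ^ i) P' : additiveC A 1) :=
    iterate_nr_toC1 hND P' hC.isSkew
  have hexp := congrArg (fun f : Module.End ℂ (additiveC A 1) => (f P' : RawC 1 A A))
    (exp_derivOp hNN).2
  simp only [LinearMap.add_apply, LinearMap.smul_apply, Submodule.coe_add, Submodule.coe_smul,
    ← hF] at hexp
  rw [Module.End.one_apply, ← pow_one (derivOp N), ← hF] at hexp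
  rw [show twist DA P (toC1 N) = _ from hexp, one_add_postcomp, one_add_precompAt,
    one_add_precompAt]
  funext b
  simp only [Module.End.mul_apply, postcomp_apply, precompAt_apply, conjC, ← sub_eq_add_neg]
  congr 1
  show P _ = P _
  congr 1
  funext i
  fin_cases i <;> rfl

end Twisting

/-- Twisting `Π^H = e^{X_Ĥ}(Π)` of a Lie conformal algebra
structure `Π` on `A = A₁ ⊕ A₂` by a `ℂ[∂]`-module homomorphism `H : A₂ → A₁`:
(i) the exponential series truncates (`X_Ĥ^i(Π) = 0` for `i ≥ 4`) and `Π^H` is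
the 4-term sum; (ii) `Π^H_λ = e^{-Ĥ} ∘ Π_λ ∘ (e^Ĥ ⊗ e^Ĥ)`; (iii)
`[Π^H, Π^H]_NR = 0` and `e^Ĥ : (A,Π^H) → (A,Π)` is an isomorphism of Lie
conformal algebras. -/
theorem statement7 {A₁ A₂ : Type*} [AddCommGroup A₁] [Module ℂ A₁]
    [AddCommGroup A₂] [Module ℂ A₂]
    (D1 : A₁ →ₗ[ℂ] A₁) (D2 : A₂ →ₗ[ℂ] A₂)
    (Pi : RawC 1 (A₁ × A₂) (A₁ × A₂))
    (hC : IsCochain (D1.prodMap D2) (D1.prodMap D2) Pi)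
    (hMC : nr (D1.prodMap D2) Pi Pi = 0)
    (H : A₂ →ₗ[ℂ] A₁) (hH : ∀ v : A₂, H (D2 v) = D1 (H v)) :
    (∀ i : ℕ, 4 ≤ i →
      (fun P : RawC 1 (A₁ × A₂) (A₁ × A₂) =>
          nr (D1.prodMap D2) P (hatHom H))^[i] Pi = 0) ∧
    (twist (D1.prodMap D2) Pi (hatHom H) =
      Pi + nr (D1.prodMap D2) Pi (hatHom H)
        + (2 : ℂ)⁻¹ •
            nr (D1.prodMap D2) (nr (D1.prodMap D2) Pi (hatHom H)) (hatHom H)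
        + (6 : ℂ)⁻¹ •
            nr (D1.prodMap D2)
              (nr (D1.prodMap D2) (nr (D1.prodMap D2) Pi (hatHom H)) (hatHom H))
              (hatHom H)) ∧
    (∀ a : Fin 2 → A₁ × A₂,
      twist (D1.prodMap D2) Pi (hatHom H) a =
        mapCoeff (eHm H) (Pi fun i => eHp H (a i))) ∧
    nr (D1.prodMap D2) (twist (D1.prodMap D2) Pi (hatHom H))
      (twist (D1.prodMap D2) Pi (hatHom H)) = 0 ∧
    Function.Bijective (eHp H) ∧
    (∀ x : A₁ × A₂, eHp H ((D1.prodMap D2) x) = (D1.prodMap D2) (eHp H x)) ∧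
    (∀ a : Fin 2 → A₁ × A₂,
      mapCoeff (eHp H) (twist (D1.prodMap D2) Pi (hatHom H) a) =
        Pi fun i => eHp H (a i)) := by
  set DA := D1.prodMap D2
  set N : Module.End ℂ (A₁ × A₂) := LinearMap.inl ℂ A₁ A₂ ∘ₗ H ∘ₗ LinearMap.snd ℂ A₁ A₂
  -- `hatHom H = toC1 N`, `eHp H = 1 + N` and `eHm H = 1 - N` hold by definition
  have hNN : ∀ v, N (N v) = 0 := fun v => by simp [N]
  have hND : ∀ v, N (DA v) = DA (N v) := fun v => Prod.ext (hH v.2) (map_zero D2).symm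
  have hinv : ∀ v, eHp H (eHm H v) = v := fun v => by simp [eHp, eHm]
  have hinv' : ∀ v, eHm H (eHp H v) = v := fun v => by simp [eHp, eHm]
  have hDeHm : ∀ v, eHm H (DA v) = DA (eHm H v) := fun v => by
    show DA v - N (DA v) = DA (v - N v)
    rw [map_sub, hND]
  have htwist : twist DA Pi (hatHom H) = conjC (eHm H) (eHp H) Pi := twist_toC1 hNN hND hC
  refine ⟨fun i hi => iterate_nr_toC1_eq_zero hNN hND hC hi, rfl, fun a => congrFun htwist a,
    ?_, Function.bijective_iff_has_inverse.mpr ⟨eHm H, hinv', hinv⟩,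
    fun x => ?_, fun a => ?_⟩
  · rw [htwist, nr_conjC hinv hDeHm, hMC, conjC_zero]
  · show DA x + N (DA x) = DA (x + N x)
    rw [map_add, hND]
  · rw [htwist, conjC, mapCoeff_mapCoeff, show eHp H * eHm H = 1 from LinearMap.ext hinv,
      mapCoeff_one]

end LCAF
end
end

section
/- Let (M;ρ) be a module over a Lie conformal algebra A and φ ∈ C²(A,M) a 2-cocycle. A ℂ[∂]-module homomorphism T : M → A is a φ-twisted relative Rota–Baxter operator if and only if its graph Gr(T) = {(T(m),m) : m ∈ M} is a subalgebra of the φ-twisted semi-direct product A ⋉_φ M. -/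
/- ------------------------------------------------------------------
Common definitions: λ-polynomials with coefficients in a ℂ[∂]-module,
Lie conformal algebras, modules, cochain complexes, the
Nijenhuis–Richardson bracket, bidegrees, lifts and twistings.
------------------------------------------------------------------- -/

open scoped Classical

noncomputable section

namespace LCAF

/-- `T : M → A` is a `φ`-twisted relative Rota–Baxter operator
iff its graph `Gr(T) = {(T m, m)}` is a subalgebra (a `∂`-stable submodule closed
under the λ-bracket) of the `φ`-twisted semidirect product `A ⋉_φ M`. -/
theorem statement14 {A M : Type*} [AddCommGroup A] [Module ℂ A]
    [AddCommGroup M] [Module ℂ M]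
    (D : A →ₗ[ℂ] A) (br : A → A → MP 1 A) (hL : IsLCA D br)
    (DM : M →ₗ[ℂ] M) (rho : A → M → MP 1 M) (hM : IsLCAMod D br DM rho)
    (phi : A → A → MP 1 M) (hphi : IsTwoCocycle D br DM rho phi)
    (T : M →ₗ[ℂ] A) (hT : ∀ m : M, T (DM m) = D (T m)) :
    IsTwistedRB br DM rho phi T ↔
      ((∀ x : A × M, T x.2 = x.1 →
          T (((D.prodMap DM) x).2) = ((D.prodMap DM) x).1) ∧
        ∀ (m n : M) (β : Fin 1 →₀ ℕ),
          T (((sdBr br DM rho phi (T m, m) (T n, n)) β).2) =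
            ((sdBr br DM rho phi (T m, m) (T n, n)) β).1) := by
  constructor
  · intro h
    refine ⟨fun x hx => by simp [LinearMap.prodMap_apply, ← hx, hT], fun m n β => ?_⟩
    have hb := h m n
    simp only [sdBr, pairP, Finsupp.add_apply, Finsupp.mapRange_apply, hb, mapCoeff]
    simp
  · rintro ⟨-, h2⟩ m n
    ext β
    have := h2 m n β
    simp only [sdBr, pairP, Finsupp.add_apply, Finsupp.mapRange_apply] at this
    simp only [mapCoeff, Finsupp.mapRange_apply]
    simpa using this.symm

end LCAF
end
end
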